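/- The formal power series s^11 does not belong to the closed subalgebra of ℂ[[s]] generated by s^3 and s^7 + s^8; that is, there is no formal power series F(X,Y) in two variables over ℂ such that substituting X = s^3 and Y = s^7 + s^8 yields s^11. -/

import Mathlib

open PowerSeries

/-- Substitution of `x = s^3`, `u = s^7 + s^8` into a formal power series `F(X, Y)` in two
variables.  Since `x` and `u` have positive order, the coefficient of `s^n` in `F(x, u)` is the
(finite) sum of the contributions of the monomials `F_{ij} x^i u^j`; indices `i, j > n` contribute
zero, so it suffices to sum over `i, j ≤ n`. -/
noncomputable def substXU (F : MvPowerSeries (Fin 2) ℂ) : PowerSeries ℂ :=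
  PowerSeries.mk fun n =>
    ∑ i ∈ Finset.range (n + 1), ∑ j ∈ Finset.range (n + 1),
      MvPowerSeries.coeff (R := ℂ) (Finsupp.single 0 i + Finsupp.single 1 j) F *
        PowerSeries.coeff (R := ℂ) n (((X : PowerSeries ℂ) ^ 3) ^ i * ((X : PowerSeries ℂ) ^ 7 + X ^ 8) ^ j)

/-! The only monomial `x^i u^j = s^(3i+7j) (1+s)^j` reaching `s^10` or `s^11` is
`x u = s^10 + s^11`, so `F(x, u)` has equal coefficients of `s^10` and `s^11`, whereas `s^11`
does not. -/

theorem PowerSeries.coeff_one_add_X_pow {R : Type*} [Semiring R] (j m : ℕ) :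
    coeff m ((1 + X : R⟦X⟧) ^ j) = j.choose m := by
  have h : ((1 + Polynomial.X : Polynomial R) : R⟦X⟧) = 1 + X := by simp
  rw [← h, ← Polynomial.coe_pow, Polynomial.coeff_coe, Polynomial.coeff_one_add_X_pow]

theorem PowerSeries.coeff_one_add_X_pow_mul_X_pow {R : Type*} [Semiring R] (j k n : ℕ) :
    coeff n ((1 + X : R⟦X⟧) ^ j * X ^ k) = if k ≤ n then (j.choose (n - k) : R) else 0 := by
  rw [coeff_mul_X_pow']
  split_ifs <;> simp [coeff_one_add_X_pow]

theorem coeff_monomial_substXU (n i j : ℕ) :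
    coeff n (((X : ℂ⟦X⟧) ^ 3) ^ i * (X ^ 7 + X ^ 8) ^ j)
      = if 3 * i + 7 * j ≤ n then (j.choose (n - (3 * i + 7 * j)) : ℂ) else 0 := by
  have h : ((X : ℂ⟦X⟧) ^ 3) ^ i * (X ^ 7 + X ^ 8) ^ j = (1 + X) ^ j * X ^ (3 * i + 7 * j) := by
    rw [show (X : ℂ⟦X⟧) ^ 7 + X ^ 8 = X ^ 7 * (1 + X) by ring, mul_pow, ← pow_mul, ← pow_mul,
      pow_add]
    ring
  rw [h, coeff_one_add_X_pow_mul_X_pow]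

theorem coeff_substXU (F : MvPowerSeries (Fin 2) ℂ) (n : ℕ) :
    coeff n (substXU F) = ∑ i ∈ Finset.range (n + 1), ∑ j ∈ Finset.range (n + 1),
      MvPowerSeries.coeff (Finsupp.single 0 i + Finsupp.single 1 j) F *
        if 3 * i + 7 * j ≤ n then (j.choose (n - (3 * i + 7 * j)) : ℂ) else 0 := by
  simp only [substXU, coeff_mk, coeff_monomial_substXU]

theorem coeff_ten_substXU (F : MvPowerSeries (Fin 2) ℂ) :
    coeff 10 (substXU F) = MvPowerSeries.coeff (Finsupp.single 0 1 + Finsupp.single 1 1) F := by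
  simp [coeff_substXU, Finset.sum_range_succ, Nat.choose]

theorem coeff_eleven_substXU (F : MvPowerSeries (Fin 2) ℂ) :
    coeff 11 (substXU F) = MvPowerSeries.coeff (Finsupp.single 0 1 + Finsupp.single 1 1) F := by
  simp [coeff_substXU, Finset.sum_range_succ, Nat.choose]

/-- `s^11` is not in the closed subalgebra of `ℂ⟦s⟧` generated by `s^3` and `s^7 + s^8`:
no two-variable formal power series `F` satisfies `F(s^3, s^7 + s^8) = s^11`. -/
theorem stmt2 : ¬ ∃ F : MvPowerSeries (Fin 2) ℂ, substXU F = (X : PowerSeries ℂ) ^ 11 := by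
  rintro ⟨F, hF⟩
  have h := (coeff_ten_substXU F).trans (coeff_eleven_substXU F).symm
  rw [hF, coeff_X_pow, coeff_X_pow] at h
  norm_num at h
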